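/- For all x ≥ 0 and thresholds 0 ≤ θ_th < Δ/2 and d_min ≤ d_th < d_max, the conditional CDF of the effective channel gain of a user in the weak two-bit group satisfies P( G ≤ x | |Θ − θ̄| ≥ θ_th and D ≥ d_th ) = (1/ξ) ∫_{d_th}^{d_max} [ ∫_{θ̄−Δ/2}^{θ̄−θ_th} ( 1 − exp( −PL(r)·x/(F_M(θ̄,θ)·σ²) ) ) dθ + ∫_{θ̄+θ_th}^{θ̄+Δ/2} ( 1 − exp( −PL(r)·x/(F_M(θ̄,θ)·σ²) ) ) dθ ] · r dr, where ξ = (Δ/2 − θ_th)·(d_max² − d_th²). -/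

import Mathlib

/-!
Write `Y = (D, Θ)`. By independence, conditioning on `Y = (r, θ)` in the support of its density
turns the event `G ≤ x` into `X ≤ x · PL(r) / F_M(θ̄, θ)`, of probability
`1 - exp(-PL(r) x / (F_M(θ̄, θ) σ²))`. Both the numerator and the denominator are therefore
integrals against the density `2r / ((d_max² - d_min²) Δ)` over
`[d_th, d_max] × ([θ̄ - Δ/2, θ̄ - θ_th] ∪ [θ̄ + θ_th, θ̄ + Δ/2])`. Fubini splits the numerator
into the two θ-integrals, the denominator is `(Δ - 2θ_th)(d_max² - d_th²) / ((d_max² - d_min²) Δ)`,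
and the normalising constant of the density cancels.
-/

open MeasureTheory ProbabilityTheory

/-- The Fejér kernel `F_M(θ̄, θ)`. -/
noncomputable def fejer (M : ℕ) (θbar θ : ℝ) : ℝ :=
  (Real.sin (Real.pi * M * (Real.sin θbar - Real.sin θ) / 2) /
    (M * Real.sin (Real.pi * (Real.sin θbar - Real.sin θ) / 2))) ^ 2

open Set

@[fun_prop]
theorem measurable_fejer (M : ℕ) (θbar : ℝ) : Measurable (fejer M θbar) := by
  unfold fejer
  fun_prop

theorem setOf_le_abs_sub_and_abs_sub_le {a c h : ℝ} (ha : 0 ≤ a) :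
    {θ : ℝ | a ≤ |θ - c| ∧ |θ - c| ≤ h} = Icc (c - h) (c - a) ∪ Icc (c + a) (c + h) := by
  ext θ
  simp only [mem_ofPred_eq, mem_union, mem_Icc, le_abs', abs_le]
  constructor
  · rintro ⟨h1 | h1, h2, h3⟩
    · exact Or.inl ⟨by linarith, by linarith⟩
    · exact Or.inr ⟨by linarith, by linarith⟩
  · rintro (⟨h1, h2⟩ | ⟨h1, h2⟩)
    · exact ⟨Or.inl (by linarith), by linarith, by linarith⟩
    · exact ⟨Or.inr (by linarith), by linarith, by linarith⟩

theorem setOf_le_abs_sub_and_le_inter_eq_Icc_prod {dmin dmax dth θth c h : ℝ}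
    (hdth : dmin ≤ dth) (hθth : 0 ≤ θth) :
    {p : ℝ × ℝ | θth ≤ |p.2 - c| ∧ dth ≤ p.1} ∩ {p | dmin ≤ p.1 ∧ p.1 ≤ dmax ∧ |p.2 - c| ≤ h}
      = Icc dth dmax ×ˢ (Icc (c - h) (c - θth) ∪ Icc (c + θth) (c + h)) := by
  ext ⟨r, θ⟩
  rw [← setOf_le_abs_sub_and_abs_sub_le hθth]
  simp only [mem_inter_iff, mem_prod, mem_ofPred_eq, mem_Icc]
  constructor
  · rintro ⟨⟨h1, h2⟩, -, h4, h5⟩; exact ⟨⟨h2, h4⟩, h1, h5⟩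
  · rintro ⟨⟨h2, h4⟩, h1, h5⟩; exact ⟨⟨h1, h2⟩, hdth.trans h2, h4, h5⟩

theorem aedisjoint_Icc_Icc {a b c d : ℝ} (hbc : b ≤ c) :
    AEDisjoint volume (Icc a b) (Icc c d) := by
  refine measure_mono_null (t := Icc c b) ?_ ?_
  · rw [Icc_inter_Icc]
    exact Icc_subset_Icc (le_max_right _ _) (min_le_left _ _)
  · rw [Real.volume_Icc, ENNReal.ofReal_eq_zero]
    linarith

theorem setIntegral_Icc_prod_Icc_union_Icc {a b c₁ d₁ c₂ d₂ : ℝ} (hab : a ≤ b) (hc₁ : c₁ ≤ d₁)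
    (hd₁ : d₁ ≤ c₂) (hc₂ : c₂ ≤ d₂) {g : ℝ × ℝ → ℝ}
    (hg : IntegrableOn g (Icc a b ×ˢ (Icc c₁ d₁ ∪ Icc c₂ d₂))) :
    ∫ p in Icc a b ×ˢ (Icc c₁ d₁ ∪ Icc c₂ d₂), g p
      = ∫ r in a..b, ((∫ θ in c₁..d₁, g (r, θ)) + ∫ θ in c₂..d₂, g (r, θ)) := by
  rw [Measure.volume_eq_prod] at hg ⊢
  rw [setIntegral_prod _ hg, integral_Icc_eq_integral_Ioc, ← intervalIntegral.integral_of_le hab]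
  refine intervalIntegral.integral_congr_ae ?_
  rw [IntegrableOn, ← Measure.prod_restrict] at hg
  filter_upwards [(ae_restrict_iff' measurableSet_Icc).1 hg.prod_right_ae] with r hr hrab
  have hsec : IntegrableOn (fun θ => g (r, θ)) (Icc c₁ d₁ ∪ Icc c₂ d₂) :=
    hr (Ioc_subset_Icc_self (uIoc_of_le hab ▸ hrab))
  rw [setIntegral_union₀ (aedisjoint_Icc_Icc hd₁) measurableSet_Icc.nullMeasurableSet
      (hsec.mono_set subset_union_left) (hsec.mono_set subset_union_right),
    integral_Icc_eq_integral_Ioc, integral_Icc_eq_integral_Ioc,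
    ← intervalIntegral.integral_of_le hc₁, ← intervalIntegral.integral_of_le hc₂]

theorem one_sub_exp_neg_div_mem_Icc {a b : ℝ} (ha : 0 ≤ a) (hb : 0 ≤ b) :
    1 - Real.exp (-a / b) ∈ Icc 0 1 :=
  ⟨sub_nonneg.2 (Real.exp_le_one_iff.2 (by rw [neg_div]; exact neg_nonpos.2 (by positivity))),
    sub_le_self _ (Real.exp_nonneg _)⟩

theorem integrableOn_one_sub_exp_neg_div_mul {α : Type*} [MeasurableSpace α] {μ : Measure α}
    {t : Set α} (ht : MeasurableSet t) {a b w : α → ℝ} (hw : IntegrableOn w t μ)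
    (ha : Measurable a) (hb : Measurable b) (ha₀ : ∀ y ∈ t, 0 ≤ a y) (hb₀ : ∀ y ∈ t, 0 ≤ b y) :
    IntegrableOn (fun y => (1 - Real.exp (-a y / b y)) * w y) t μ :=
  hw.bdd_mul (c := 1) (Measurable.aestronglyMeasurable (by fun_prop))
    ((ae_restrict_iff' ht).2 (ae_of_all _ fun y hy => by
      obtain ⟨h₀, h₁⟩ := one_sub_exp_neg_div_mem_Icc (ha₀ y hy) (hb₀ y hy)
      rwa [Real.norm_of_nonneg h₀]))

theorem IndepFun.measure_mem_and_mem_eq_setLIntegral {Ω α β : Type*} [MeasurableSpace Ω]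
    [MeasurableSpace α] [MeasurableSpace β] {P : Measure Ω} [IsProbabilityMeasure P]
    {Y : Ω → α} {X : Ω → β} (hY : Measurable Y) (hX : Measurable X) (hind : IndepFun Y X P)
    {S : Set (α × β)} (hS : MeasurableSet S) {A : Set α} (hA : MeasurableSet A) :
    P {ω | (Y ω, X ω) ∈ S ∧ Y ω ∈ A} = ∫⁻ a in A, P.map X (Prod.mk a ⁻¹' S) ∂(P.map Y) := by
  have : IsProbabilityMeasure (P.map X) := Measure.isProbabilityMeasure_map hX.aemeasurable
  have hSA : MeasurableSet (S ∩ Prod.fst ⁻¹' A) := hS.inter (measurable_fst hA)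
  change P ((fun ω => (Y ω, X ω)) ⁻¹' (S ∩ Prod.fst ⁻¹' A)) = _
  rw [← Measure.map_apply (hY.prodMk hX) hSA,
    (indepFun_iff_map_prod_eq_prod_map_map hY.aemeasurable hX.aemeasurable).1 hind,
    Measure.prod_apply hSA, ← lintegral_indicator hA]
  congr 1 with a
  by_cases ha : a ∈ A <;> simp [ha, ← preimage_comp, Function.comp_def]

theorem setLIntegral_withDensity_indicator {α : Type*} [MeasurableSpace α] {μ : Measure α}
    {s t : Set α} (hs : MeasurableSet s) (ht : MeasurableSet t) {f g : α → ENNReal}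
    (hf : Measurable f) (hg : Measurable g) :
    ∫⁻ a in t, g a ∂(μ.withDensity (s.indicator f)) = ∫⁻ a in t ∩ s, g a * f a ∂μ := by
  rw [withDensity_indicator hs, setLIntegral_withDensity_eq_setLIntegral_mul _ hf hg ht,
    Measure.restrict_restrict ht]
  simp only [Pi.mul_apply, mul_comm]

theorem toReal_measure_preimage_eq_setIntegral {Ω α : Type*} [MeasurableSpace Ω]
    [MeasurableSpace α] {P : Measure Ω} {Y : Ω → α} (hY : Measurable Y) {μ : Measure α}
    {s A : Set α} (hs : MeasurableSet s) (hA : MeasurableSet A) {w : α → ℝ}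
    (hw : IntegrableOn w (A ∩ s) μ) (hw₀ : ∀ y ∈ A ∩ s, 0 ≤ w y)
    (hlaw : P.map Y = μ.withDensity (s.indicator fun y => ENNReal.ofReal (w y))) :
    (P (Y ⁻¹' A)).toReal = ∫ y in A ∩ s, w y ∂μ := by
  rw [← Measure.map_apply hY hA, hlaw, withDensity_apply _ hA, lintegral_indicator hs,
    Measure.restrict_restrict hs, inter_comm, ← ofReal_integral_eq_lintegral_ofReal hw
      ((ae_restrict_iff' (hA.inter hs)).2 (ae_of_all _ hw₀)),
    ENNReal.toReal_ofReal (setIntegral_nonneg (hA.inter hs) hw₀)]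

section ExponentialTail

variable {Ω : Type*} [MeasurableSpace Ω] {P : Measure Ω} [IsProbabilityMeasure P] {X : Ω → ℝ}
  {σ : ℝ}

theorem map_Iic_eq_of_exponential_tail (hX : Measurable X)
    (hXexp : ∀ x : ℝ, 0 ≤ x → (P {ω | x < X ω}).toReal = Real.exp (-x / σ ^ 2))
    {s : ℝ} (hs : 0 ≤ s) : P.map X (Iic s) = ENNReal.ofReal (1 - Real.exp (-s / σ ^ 2)) := by
  have htail : P {ω | s < X ω} = ENNReal.ofReal (Real.exp (-s / σ ^ 2)) := by
    rw [← hXexp s hs, ENNReal.ofReal_toReal (measure_ne_top P _)]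
  rw [Measure.map_apply hX measurableSet_Iic, show X ⁻¹' Iic s = {ω | s < X ω}ᶜ by ext; simp,
    prob_compl_eq_one_sub (measurableSet_lt measurable_const hX), htail, ← ENNReal.ofReal_one,
    ← ENNReal.ofReal_sub _ (Real.exp_nonneg _)]

theorem map_setOf_mul_div_le_of_exponential_tail (hX : Measurable X)
    (hXexp : ∀ x : ℝ, 0 ≤ x → (P {ω | x < X ω}).toReal = Real.exp (-x / σ ^ 2))
    {a b x : ℝ} (ha : 0 < a) (hb : 0 < b) (hx : 0 ≤ x) :
    P.map X {t | t * b / a ≤ x} = ENNReal.ofReal (1 - Real.exp (-(a * x) / (b * σ ^ 2))) := by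
  have hset : {t : ℝ | t * b / a ≤ x} = Iic (x * a / b) := by
    ext t
    rw [mem_ofPred_eq, mem_Iic, div_le_iff₀ ha, le_div_iff₀ hb]
  rw [hset, map_Iic_eq_of_exponential_tail hX hXexp (by positivity)]
  congr 3
  field_simp

theorem toReal_measure_mul_div_le_and_mem_eq_setIntegral {α : Type*} [MeasurableSpace α]
    (hX : Measurable X)
    (hXexp : ∀ x : ℝ, 0 ≤ x → (P {ω | x < X ω}).toReal = Real.exp (-x / σ ^ 2))
    {Y : Ω → α} (hY : Measurable Y) (hind : IndepFun Y X P) {μ : Measure α} {s A : Set α}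
    (hs : MeasurableSet s) (hA : MeasurableSet A) {w : α → ℝ} (hw : Measurable w)
    (hwA : IntegrableOn w (A ∩ s) μ) (hw₀ : ∀ y ∈ A ∩ s, 0 ≤ w y)
    (hlaw : P.map Y = μ.withDensity (s.indicator fun y => ENNReal.ofReal (w y)))
    {a b : α → ℝ} (ha : Measurable a) (hb : Measurable b) (ha₀ : ∀ y ∈ s, 0 < a y)
    (hb₀ : ∀ y ∈ s, 0 < b y) {x : ℝ} (hx : 0 ≤ x) :
    (P {ω | X ω * b (Y ω) / a (Y ω) ≤ x ∧ Y ω ∈ A}).toReal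
      = ∫ y in A ∩ s, (1 - Real.exp (-(a y * x) / (b y * σ ^ 2))) * w y ∂μ := by
  have hS : MeasurableSet {q : α × ℝ | q.2 * b q.1 / a q.1 ≤ x} :=
    measurableSet_le (by fun_prop) measurable_const
  have hAs := hA.inter hs
  have hax : ∀ y ∈ A ∩ s, 0 ≤ a y * x := fun y hy => mul_nonneg (ha₀ y hy.2).le hx
  have hbσ : ∀ y ∈ A ∩ s, 0 ≤ b y * σ ^ 2 := fun y hy => mul_nonneg (hb₀ y hy.2).le (sq_nonneg σ)
  have hE : ∀ y ∈ A ∩ s, 1 - Real.exp (-(a y * x) / (b y * σ ^ 2)) ∈ Icc 0 1 := fun y hy =>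
    one_sub_exp_neg_div_mem_Icc (hax y hy) (hbσ y hy)
  have hEw : ∀ y ∈ A ∩ s, 0 ≤ (1 - Real.exp (-(a y * x) / (b y * σ ^ 2))) * w y := fun y hy =>
    mul_nonneg (hE y hy).1 (hw₀ y hy)
  rw [← ENNReal.toReal_ofReal (setIntegral_nonneg hAs hEw), ofReal_integral_eq_lintegral_ofReal
      (integrableOn_one_sub_exp_neg_div_mul hAs hwA (by fun_prop) (by fun_prop) hax hbσ)
      ((ae_restrict_iff' hAs).2 (ae_of_all _ hEw))]
  refine congrArg ENNReal.toReal
    ((IndepFun.measure_mem_and_mem_eq_setLIntegral hY hX hind hS hA).trans ?_)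
  rw [hlaw,
    setLIntegral_withDensity_indicator hs hA (by fun_prop) (measurable_measure_prodMk_left hS)]
  refine setLIntegral_congr_fun hAs fun y hy => ?_
  rw [ENNReal.ofReal_mul (hE y hy).1]
  exact congrArg (· * _)
    (map_setOf_mul_div_le_of_exponential_tail hX hXexp (ha₀ y hy.2) (hb₀ y hy.2) hx)

end ExponentialTail

theorem cdf_effective_gain_weak_two_bit_general
    {Ω : Type*} [MeasurableSpace Ω] (P : Measure Ω) [IsProbabilityMeasure P]
    (dmin dmax Δ θbar σ : ℝ) (M : ℕ)
    (hdmin : 0 ≤ dmin) (hdd : dmin < dmax) (hΔ : 0 < Δ)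
    (D Θ X : Ω → ℝ) (hD : Measurable D) (hΘ : Measurable Θ) (hX : Measurable X)
    (hlaw : Measure.map (fun ω => (D ω, Θ ω)) P
      = volume.withDensity (fun p : ℝ × ℝ => ENNReal.ofReal
          (if dmin ≤ p.1 ∧ p.1 ≤ dmax ∧ |p.2 - θbar| ≤ Δ / 2 then
            2 * p.1 / ((dmax ^ 2 - dmin ^ 2) * Δ) else 0)))
    (hXexp : ∀ x : ℝ, 0 ≤ x → (P {ω | x < X ω}).toReal = Real.exp (-x / σ ^ 2))
    (hindep : IndepFun X (fun ω => (D ω, Θ ω)) P)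
    (PL : ℝ → ℝ) (hPL : Measurable PL)
    (hPLpos : ∀ r, dmin ≤ r → r ≤ dmax → 0 < PL r)
    (hFM : ∀ θ, |θ - θbar| ≤ Δ / 2 → 0 < fejer M θbar θ)
    (G : Ω → ℝ) (hG : G = fun ω => X ω * fejer M θbar (Θ ω) / PL (D ω))
    (x θth dth : ℝ) (hx : 0 ≤ x)
    (hθth : 0 ≤ θth) (hθth' : θth < Δ / 2)
    (hdth : dmin ≤ dth) (hdth' : dth < dmax) :
    (P {ω | G ω ≤ x ∧ θth ≤ |Θ ω - θbar| ∧ dth ≤ D ω}).toReal /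
        (P {ω | θth ≤ |Θ ω - θbar| ∧ dth ≤ D ω}).toReal
      = (1 / ((Δ / 2 - θth) * (dmax ^ 2 - dth ^ 2))) *
          ∫ r in dth..dmax,
            ((∫ θ in (θbar - Δ / 2)..(θbar - θth),
                (1 - Real.exp (-(PL r * x) / (fejer M θbar θ * σ ^ 2)))) +
             (∫ θ in (θbar + θth)..(θbar + Δ / 2),
                (1 - Real.exp (-(PL r * x) / (fejer M θbar θ * σ ^ 2))))) * r := by
  subst hG
  set c := 2 / ((dmax ^ 2 - dmin ^ 2) * Δ)
  set box : Set (ℝ × ℝ) := {p | dmin ≤ p.1 ∧ p.1 ≤ dmax ∧ |p.2 - θbar| ≤ Δ / 2}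
  set A : Set (ℝ × ℝ) := {p | θth ≤ |p.2 - θbar| ∧ dth ≤ p.1}
  have hc : 0 < c := div_pos two_pos (mul_pos (by nlinarith) hΔ)
  have hbox : MeasurableSet box := by unfold box; measurability
  have hA : MeasurableSet A := by unfold A; measurability
  have hAB := setOf_le_abs_sub_and_le_inter_eq_Icc_prod (dmax := dmax) (c := θbar) (h := Δ / 2)
    hdth hθth
  have hlaw' : P.map (fun ω => (D ω, Θ ω))
      = volume.withDensity (box.indicator fun p => ENNReal.ofReal (p.1 * c)) := by
    rw [hlaw]
    congr 1 with p
    simp only [indicator_apply, box, mem_ofPred_eq, c]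
    split_ifs
    · ring_nf
    · exact ENNReal.ofReal_zero
  have hw : IntegrableOn (fun p : ℝ × ℝ => p.1 * c) (A ∩ box) := hAB ▸
    (continuous_fst.mul continuous_const).continuousOn.integrableOn_compact
      (isCompact_Icc.prod (isCompact_Icc.union isCompact_Icc))
  have hw₀ : ∀ p ∈ A ∩ box, 0 ≤ p.1 * c := fun p hp => mul_nonneg (hdmin.trans hp.2.1) hc.le
  have hnum := toReal_measure_mul_div_le_and_mem_eq_setIntegral hX hXexp (hD.prodMk hΘ)
    hindep.symm hbox hA (by fun_prop) hw hw₀ hlaw' (a := fun p => PL p.1)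
    (b := fun p => fejer M θbar p.2) (by fun_prop) (by fun_prop)
    (fun p hp => hPLpos _ hp.1 hp.2.1) (fun p hp => hFM _ hp.2.2) hx
  have hden := toReal_measure_preimage_eq_setIntegral (hD.prodMk hΘ) hbox hA hw hw₀ hlaw'
  have hEw := integrableOn_one_sub_exp_neg_div_mul (hA.inter hbox) hw
    (a := fun p => PL p.1 * x) (b := fun p => fejer M θbar p.2 * σ ^ 2) (by fun_prop) (by fun_prop)
    (fun p hp => mul_nonneg (hPLpos _ hp.2.1 hp.2.2.1).le hx)
    (fun p hp => mul_nonneg (hFM _ hp.2.2.2).le (sq_nonneg σ))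
  rw [hAB] at hw hEw hnum hden
  refine (congr_arg₂ (· / ·) hnum hden).trans ?_
  rw [setIntegral_Icc_prod_Icc_union_Icc hdth'.le (by linarith) (by linarith) (by linarith) hEw,
    setIntegral_Icc_prod_Icc_union_Icc hdth'.le (by linarith) (by linarith) (by linarith) hw]
  simp only [intervalIntegral.integral_mul_const, intervalIntegral.integral_const, smul_eq_mul,
    ← add_mul, ← mul_assoc]
  rw [intervalIntegral.integral_const_mul, integral_id, mul_div_mul_right _ _ hc.ne',
    div_eq_inv_mul, one_div]
  congr 2
  ring

theorem cdf_effective_gain_weak_two_bit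
    {Ω : Type*} [MeasurableSpace Ω] (P : Measure Ω) [IsProbabilityMeasure P]
    (dmin dmax Δ θbar σ : ℝ) (M : ℕ)
    (hdmin : 0 ≤ dmin) (hdd : dmin < dmax) (hΔ : 0 < Δ) (hσ : 0 < σ) (hM : 1 ≤ M)
    (D Θ X : Ω → ℝ) (hD : Measurable D) (hΘ : Measurable Θ) (hX : Measurable X)
    (hlaw : Measure.map (fun ω => (D ω, Θ ω)) P
      = volume.withDensity (fun p : ℝ × ℝ => ENNReal.ofReal
          (if dmin ≤ p.1 ∧ p.1 ≤ dmax ∧ |p.2 - θbar| ≤ Δ / 2 then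
            2 * p.1 / ((dmax ^ 2 - dmin ^ 2) * Δ) else 0)))
    (hXexp : ∀ x : ℝ, 0 ≤ x → (P {ω | x < X ω}).toReal = Real.exp (-x / σ ^ 2))
    (hindep : IndepFun X (fun ω => (D ω, Θ ω)) P)
    (PL : ℝ → ℝ) (hPL : Measurable PL)
    (hPLpos : ∀ r, dmin ≤ r → r ≤ dmax → 0 < PL r)
    (hFM : ∀ θ, |θ - θbar| ≤ Δ / 2 → 0 < fejer M θbar θ)
    (G : Ω → ℝ) (hG : G = fun ω => X ω * fejer M θbar (Θ ω) / PL (D ω))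
    (x θth dth : ℝ) (hx : 0 ≤ x)
    (hθth : 0 ≤ θth) (hθth' : θth < Δ / 2)
    (hdth : dmin ≤ dth) (hdth' : dth < dmax) :
    (P {ω | G ω ≤ x ∧ θth ≤ |Θ ω - θbar| ∧ dth ≤ D ω}).toReal /
        (P {ω | θth ≤ |Θ ω - θbar| ∧ dth ≤ D ω}).toReal
      = (1 / ((Δ / 2 - θth) * (dmax ^ 2 - dth ^ 2))) *
          ∫ r in dth..dmax,
            ((∫ θ in (θbar - Δ / 2)..(θbar - θth),
                (1 - Real.exp (-(PL r * x) / (fejer M θbar θ * σ ^ 2)))) +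
             (∫ θ in (θbar + θth)..(θbar + Δ / 2),
                (1 - Real.exp (-(PL r * x) / (fejer M θbar θ * σ ^ 2))))) * r :=
  cdf_effective_gain_weak_two_bit_general P dmin dmax Δ θbar σ M hdmin hdd hΔ D Θ X hD hΘ hX hlaw
    hXexp hindep PL hPL hPLpos hFM G hG x θth dth hx hθth hθth' hdth hdth'
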